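/- If D₁ = ad q₁ and D₂ = ad q₂ are inner derivations (no commutativity assumed), then the trilinear map Ψ̃(a₁,a₂,a₃) = Σ_{σ∈S₃} sgn(σ) [ Tr(q₁·a_{σ(1)}·q₂·a_{σ(2)}·a_{σ(3)}) - Tr(q₁·a_{σ(1)}·a_{σ(2)}·q₂·a_{σ(3)}) - Tr(q₂·a_{σ(1)}·q₁·a_{σ(2)}·a_{σ(3)}) + Tr(q₂·a_{σ(1)}·a_{σ(2)}·q₁·a_{σ(3)}) + Tr(a_{σ(1)}·q₁·a_{σ(2)}·q₂·a_{σ(3)}) - Tr(a_{σ(1)}·q₂·a_{σ(2)}·q₁·a_{σ(3)}) ], i.e. the alternation of Tr((q₁ a_{σ(1)} - a_{σ(1)} q₁)(q₂ a_{σ(2)} - a_{σ(2)} q₂) a_{σ(3)}) minus the same expression with q₁ and q₂ interchanged, with the terms in which q₁ and q₂ stand adjacent removed, is a 3-cocycle on the Lie algebra A, that is, Σ_{1≤i<j≤4} (-1)^{i+j} Ψ̃([x_i,x_j], x₁,…,x̂_i,…,x̂_j,…,x₄) = 0. -/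
import Mathlib


/-- The "no adjacent `q₁ q₂`" part of the inner-derivation cocycle. -/
noncomputable def PsiTilde {A : Type*} [Ring A] [Algebra ℂ A]
    (Tr : A →ₗ[ℂ] ℂ) (q₁ q₂ : A) (a₁ a₂ a₃ : A) : ℂ :=
  ∑ σ : Equiv.Perm (Fin 3), ((Equiv.Perm.sign σ : ℤ) : ℂ) *
    (Tr (q₁ * ![a₁, a₂, a₃] (σ 0) * q₂ * ![a₁, a₂, a₃] (σ 1) * ![a₁, a₂, a₃] (σ 2))
   - Tr (q₁ * ![a₁, a₂, a₃] (σ 0) * ![a₁, a₂, a₃] (σ 1) * q₂ * ![a₁, a₂, a₃] (σ 2))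
   - Tr (q₂ * ![a₁, a₂, a₃] (σ 0) * q₁ * ![a₁, a₂, a₃] (σ 1) * ![a₁, a₂, a₃] (σ 2))
   + Tr (q₂ * ![a₁, a₂, a₃] (σ 0) * ![a₁, a₂, a₃] (σ 1) * q₁ * ![a₁, a₂, a₃] (σ 2))
   + Tr (![a₁, a₂, a₃] (σ 0) * q₁ * ![a₁, a₂, a₃] (σ 1) * q₂ * ![a₁, a₂, a₃] (σ 2))
   - Tr (![a₁, a₂, a₃] (σ 0) * q₂ * ![a₁, a₂, a₃] (σ 1) * q₁ * ![a₁, a₂, a₃] (σ 2)))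

private lemma psi_eq {A : Type*} [Ring A] [Algebra ℂ A]
    (Tr : A →ₗ[ℂ] ℂ) (q₁ q₂ a₁ a₂ a₃ : A) :
    PsiTilde Tr q₁ q₂ a₁ a₂ a₃ =
      Tr (q₁ * a₁ * q₂ * a₂ * a₃) - Tr (q₁ * a₁ * a₂ * q₂ * a₃) - Tr (q₂ * a₁ * q₁ * a₂ * a₃) + Tr (q₂ * a₁ * a₂ * q₁ * a₃) + Tr (a₁ * q₁ * a₂ * q₂ * a₃) - Tr (a₁ * q₂ * a₂ * q₁ * a₃) - Tr (q₁ * a₁ * q₂ * a₃ * a₂) + Tr (q₁ * a₁ * a₃ * q₂ * a₂) + Tr (q₂ * a₁ * q₁ * a₃ * a₂) - Tr (q₂ * a₁ * a₃ * q₁ * a₂) - Tr (a₁ * q₁ * a₃ * q₂ * a₂) + Tr (a₁ * q₂ * a₃ * q₁ * a₂) - Tr (q₁ * a₂ * q₂ * a₁ * a₃) + Tr (q₁ * a₂ * a₁ * q₂ * a₃) + Tr (q₂ * a₂ * q₁ * a₁ * a₃) - Tr (q₂ * a₂ * a₁ * q₁ * a₃) - Tr (a₂ * q₁ * a₁ *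 q₂ * a₃) + Tr (a₂ * q₂ * a₁ * q₁ * a₃) + Tr (q₁ * a₂ * q₂ * a₃ * a₁) - Tr (q₁ * a₂ * a₃ * q₂ * a₁) - Tr (q₂ * a₂ * q₁ * a₃ * a₁) + Tr (q₂ * a₂ * a₃ * q₁ * a₁) + Tr (a₂ * q₁ * a₃ * q₂ * a₁) - Tr (a₂ * q₂ * a₃ * q₁ * a₁) + Tr (q₁ * a₃ * q₂ * a₁ * a₂) - Tr (q₁ * a₃ * a₁ * q₂ * a₂) - Tr (q₂ * a₃ * q₁ * a₁ * a₂) + Tr (q₂ * a₃ * a₁ * q₁ * a₂) + Tr (a₃ * q₁ * a₁ * q₂ * a₂) - Tr (a₃ * q₂ * a₁ * q₁ * a₂) - Tr (q₁ * a₃ * q₂ * a₂ * a₁) + Tr (q₁ * a₃ * a₂ * q₂ * a₁) + Tr (q₂ * a₃ * q₁ * a₂ * a₁) - Tr (q₂ * a₃ * a₂ * q₁ * a₁) - Tr (a₃ * q₁ * a₂ * q₂ * a₁) + Tr (a₃ * q₂ * a₂ * q₁ * a₁) := by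
  rw [PsiTilde]
  rw [show (Finset.univ : Finset (Equiv.Perm (Fin 3))) =
    {1, Equiv.swap 0 1, Equiv.swap 0 2, Equiv.swap 1 2,
     Equiv.swap 0 1 * Equiv.swap 1 2, Equiv.swap 1 2 * Equiv.swap 0 1} from by decide]
  rw [Finset.sum_insert (by decide), Finset.sum_insert (by decide),
      Finset.sum_insert (by decide), Finset.sum_insert (by decide),
      Finset.sum_insert (by decide), Finset.sum_singleton]
  simp only [show ((Equiv.swap (0:Fin 3) 1) 0) = 1 from by decide,
    show ((Equiv.swap (0:Fin 3) 1) 1) = 0 from by decide,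
    show ((Equiv.swap (0:Fin 3) 1) 2) = 2 from by decide,
    show ((Equiv.swap (0:Fin 3) 2) 0) = 2 from by decide,
    show ((Equiv.swap (0:Fin 3) 2) 1) = 1 from by decide,
    show ((Equiv.swap (0:Fin 3) 2) 2) = 0 from by decide,
    show ((Equiv.swap (1:Fin 3) 2) 0) = 0 from by decide,
    show ((Equiv.swap (1:Fin 3) 2) 1) = 2 from by decide,
    show ((Equiv.swap (1:Fin 3) 2) 2) = 1 from by decide,
    Equiv.Perm.mul_apply, Equiv.Perm.one_apply,
    show (Equiv.Perm.sign (1 : Equiv.Perm (Fin 3)) : ℤ) = 1 from by decide,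
    show (Equiv.Perm.sign (Equiv.swap (0:Fin 3) 1) : ℤ) = -1 from by decide,
    show (Equiv.Perm.sign (Equiv.swap (0:Fin 3) 2) : ℤ) = -1 from by decide,
    show (Equiv.Perm.sign (Equiv.swap (1:Fin 3) 2) : ℤ) = -1 from by decide,
    show (Equiv.Perm.sign (Equiv.swap (0:Fin 3) 1 * Equiv.swap 1 2) : ℤ) = 1 from by decide,
    show (Equiv.Perm.sign (Equiv.swap (1:Fin 3) 2 * Equiv.swap 0 1) : ℤ) = 1 from by decide,
    Matrix.cons_val_zero, Matrix.cons_val_one, Matrix.head_cons,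
    Matrix.cons_val_two, Matrix.tail_cons]
  push_cast
  ring

set_option maxHeartbeats 4000000 in
theorem stmt_14 {A : Type*} [Ring A] [Algebra ℂ A]
    (Tr : A →ₗ[ℂ] ℂ) (hTr : ∀ x y : A, Tr (x * y) = Tr (y * x))
    (q₁ q₂ : A) :
    ∀ x₁ x₂ x₃ x₄ : A,
      - PsiTilde Tr q₁ q₂ (x₁ * x₂ - x₂ * x₁) x₃ x₄
      + PsiTilde Tr q₁ q₂ (x₁ * x₃ - x₃ * x₁) x₂ x₄
      - PsiTilde Tr q₁ q₂ (x₁ * x₄ - x₄ * x₁) x₂ x₃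
      - PsiTilde Tr q₁ q₂ (x₂ * x₃ - x₃ * x₂) x₁ x₄
      + PsiTilde Tr q₁ q₂ (x₂ * x₄ - x₄ * x₂) x₁ x₃
      - PsiTilde Tr q₁ q₂ (x₃ * x₄ - x₄ * x₃) x₁ x₂ = 0 := by
  intro x₁ x₂ x₃ x₄
  have rot : ∀ a b c d e f : A,
      Tr (a * (b * (c * (d * (e * f))))) = Tr (b * (c * (d * (e * (f * a))))) := by
    intro a b c d e f
    rw [hTr]
    simp only [mul_assoc]
  simp only [psi_eq]
  simp only [sub_mul, mul_sub, mul_assoc, map_sub]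
  linear_combination (-1 : ℂ) * (rot x₁ x₂ q₁ x₃ q₂ x₄) +
      (-1 : ℂ) * (rot x₂ q₁ x₃ q₂ x₄ x₁) +
      (rot x₂ x₁ q₁ x₃ q₂ x₄) +
      (rot x₁ q₁ x₃ q₂ x₄ x₂) +
      (rot x₁ x₂ q₂ x₃ q₁ x₄) +
      (rot x₂ q₂ x₃ q₁ x₄ x₁) +
      (rot q₂ x₃ q₁ x₄ x₁ x₂) +
      (rot x₃ q₁ x₄ x₁ x₂ q₂) +
      (-1 : ℂ) * (rot x₂ x₁ q₂ x₃ q₁ x₄) +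
      (-1 : ℂ) * (rot x₁ q₂ x₃ q₁ x₄ x₂) +
      (-1 : ℂ) * (rot q₂ x₃ q₁ x₄ x₂ x₁) +
      (-1 : ℂ) * (rot x₃ q₁ x₄ x₂ x₁ q₂) +
      (rot x₁ x₂ q₁ x₄ q₂ x₃) +
      (rot x₂ q₁ x₄ q₂ x₃ x₁) +
      (-1 : ℂ) * (rot x₂ x₁ q₁ x₄ q₂ x₃) +
      (-1 : ℂ) * (rot x₁ q₁ x₄ q₂ x₃ x₂) +
      (-1 : ℂ) * (rot x₁ x₂ q₂ x₄ q₁ x₃) +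
      (-1 : ℂ) * (rot x₂ q₂ x₄ q₁ x₃ x₁) +
      (-1 : ℂ) * (rot q₂ x₄ q₁ x₃ x₁ x₂) +
      (-1 : ℂ) * (rot x₄ q₁ x₃ x₁ x₂ q₂) +
      (rot x₂ x₁ q₂ x₄ q₁ x₃) +
      (rot x₁ q₂ x₄ q₁ x₃ x₂) +
      (rot q₂ x₄ q₁ x₃ x₂ x₁) +
      (rot x₄ q₁ x₃ x₂ x₁ q₂) +
      (rot x₃ q₁ x₁ x₂ q₂ x₄) +
      (-1 : ℂ) * (rot x₃ q₁ x₂ x₁ q₂ x₄) +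
      (-1 : ℂ) * (rot x₃ q₂ x₁ x₂ q₁ x₄) +
      (-1 : ℂ) * (rot q₂ x₁ x₂ q₁ x₄ x₃) +
      (-1 : ℂ) * (rot x₁ x₂ q₁ x₄ x₃ q₂) +
      (-1 : ℂ) * (rot x₂ q₁ x₄ x₃ q₂ x₁) +
      (rot x₃ q₂ x₂ x₁ q₁ x₄) +
      (rot q₂ x₂ x₁ q₁ x₄ x₃) +
      (rot x₂ x₁ q₁ x₄ x₃ q₂) +
      (rot x₁ q₁ x₄ x₃ q₂ x₂) +
      (-1 : ℂ) * (rot x₃ q₁ x₄ q₂ x₁ x₂) +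
      (rot x₃ q₁ x₄ q₂ x₂ x₁) +
      (rot x₃ q₂ x₄ q₁ x₁ x₂) +
      (rot q₂ x₄ q₁ x₁ x₂ x₃) +
      (rot x₄ q₁ x₁ x₂ x₃ q₂) +
      (-1 : ℂ) * (rot x₃ q₂ x₄ q₁ x₂ x₁) +
      (-1 : ℂ) * (rot q₂ x₄ q₁ x₂ x₁ x₃) +
      (-1 : ℂ) * (rot x₄ q₁ x₂ x₁ x₃ q₂) +
      (-1 : ℂ) * (rot x₄ q₁ x₁ x₂ q₂ x₃) +
      (rot x₄ q₁ x₂ x₁ q₂ x₃) +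
      (rot x₄ q₂ x₁ x₂ q₁ x₃) +
      (rot q₂ x₁ x₂ q₁ x₃ x₄) +
      (rot x₁ x₂ q₁ x₃ x₄ q₂) +
      (rot x₂ q₁ x₃ x₄ q₂ x₁) +
      (-1 : ℂ) * (rot x₄ q₂ x₂ x₁ q₁ x₃) +
      (-1 : ℂ) * (rot q₂ x₂ x₁ q₁ x₃ x₄) +
      (-1 : ℂ) * (rot x₂ x₁ q₁ x₃ x₄ q₂) +
      (-1 : ℂ) * (rot x₁ q₁ x₃ x₄ q₂ x₂) +
      (rot x₄ q₁ x₃ q₂ x₁ x₂) +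
      (-1 : ℂ) * (rot x₄ q₁ x₃ q₂ x₂ x₁) +
      (-1 : ℂ) * (rot x₄ q₂ x₃ q₁ x₁ x₂) +
      (-1 : ℂ) * (rot q₂ x₃ q₁ x₁ x₂ x₄) +
      (-1 : ℂ) * (rot x₃ q₁ x₁ x₂ x₄ q₂) +
      (rot x₄ q₂ x₃ q₁ x₂ x₁) +
      (rot q₂ x₃ q₁ x₂ x₁ x₄) +
      (rot x₃ q₁ x₂ x₁ x₄ q₂) +
      (rot x₁ x₃ q₁ x₂ q₂ x₄) +
      (rot x₃ q₁ x₂ q₂ x₄ x₁) +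
      (-1 : ℂ) * (rot x₃ x₁ q₁ x₂ q₂ x₄) +
      (-1 : ℂ) * (rot x₁ q₁ x₂ q₂ x₄ x₃) +
      (-1 : ℂ) * (rot x₁ x₃ q₂ x₂ q₁ x₄) +
      (-1 : ℂ) * (rot x₃ q₂ x₂ q₁ x₄ x₁) +
      (-1 : ℂ) * (rot q₂ x₂ q₁ x₄ x₁ x₃) +
      (-1 : ℂ) * (rot x₂ q₁ x₄ x₁ x₃ q₂) +
      (rot x₃ x₁ q₂ x₂ q₁ x₄) +
      (rot x₁ q₂ x₂ q₁ x₄ x₃) +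
      (rot q₂ x₂ q₁ x₄ x₃ x₁) +
      (rot x₂ q₁ x₄ x₃ x₁ q₂) +
      (-1 : ℂ) * (rot x₁ x₃ q₁ x₄ q₂ x₂) +
      (-1 : ℂ) * (rot x₃ q₁ x₄ q₂ x₂ x₁) +
      (rot x₃ x₁ q₁ x₄ q₂ x₂) +
      (rot x₁ q₁ x₄ q₂ x₂ x₃) +
      (rot x₁ x₃ q₂ x₄ q₁ x₂) +
      (rot x₃ q₂ x₄ q₁ x₂ x₁) +
      (rot q₂ x₄ q₁ x₂ x₁ x₃) +
      (rot x₄ q₁ x₂ x₁ x₃ q₂) +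
      (-1 : ℂ) * (rot x₃ x₁ q₂ x₄ q₁ x₂) +
      (-1 : ℂ) * (rot x₁ q₂ x₄ q₁ x₂ x₃) +
      (-1 : ℂ) * (rot q₂ x₄ q₁ x₂ x₃ x₁) +
      (-1 : ℂ) * (rot x₄ q₁ x₂ x₃ x₁ q₂) +
      (-1 : ℂ) * (rot x₂ q₁ x₁ x₃ q₂ x₄) +
      (rot x₂ q₁ x₃ x₁ q₂ x₄) +
      (rot x₂ q₂ x₁ x₃ q₁ x₄) +
      (rot q₂ x₁ x₃ q₁ x₄ x₂) +
      (rot x₁ x₃ q₁ x₄ x₂ q₂) +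
      (rot x₃ q₁ x₄ x₂ q₂ x₁) +
      (-1 : ℂ) * (rot x₂ q₂ x₃ x₁ q₁ x₄) +
      (-1 : ℂ) * (rot q₂ x₃ x₁ q₁ x₄ x₂) +
      (-1 : ℂ) * (rot x₃ x₁ q₁ x₄ x₂ q₂) +
      (-1 : ℂ) * (rot x₁ q₁ x₄ x₂ q₂ x₃) +
      (rot x₂ q₁ x₄ q₂ x₁ x₃) +
      (-1 : ℂ) * (rot x₂ q₁ x₄ q₂ x₃ x₁) +
      (-1 : ℂ) * (rot x₂ q₂ x₄ q₁ x₁ x₃) +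
      (-1 : ℂ) * (rot q₂ x₄ q₁ x₁ x₃ x₂) +
      (-1 : ℂ) * (rot x₄ q₁ x₁ x₃ x₂ q₂) +
      (rot x₂ q₂ x₄ q₁ x₃ x₁) +
      (rot q₂ x₄ q₁ x₃ x₁ x₂) +
      (rot x₄ q₁ x₃ x₁ x₂ q₂) +
      (rot x₄ q₁ x₁ x₃ q₂ x₂) +
      (-1 : ℂ) * (rot x₄ q₁ x₃ x₁ q₂ x₂) +
      (-1 : ℂ) * (rot x₄ q₂ x₁ x₃ q₁ x₂) +
      (-1 : ℂ) * (rot q₂ x₁ x₃ q₁ x₂ x₄) +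
      (-1 : ℂ) * (rot x₁ x₃ q₁ x₂ x₄ q₂) +
      (-1 : ℂ) * (rot x₃ q₁ x₂ x₄ q₂ x₁) +
      (rot x₄ q₂ x₃ x₁ q₁ x₂) +
      (rot q₂ x₃ x₁ q₁ x₂ x₄) +
      (rot x₃ x₁ q₁ x₂ x₄ q₂) +
      (rot x₁ q₁ x₂ x₄ q₂ x₃) +
      (-1 : ℂ) * (rot x₄ q₁ x₂ q₂ x₁ x₃) +
      (rot x₄ q₁ x₂ q₂ x₃ x₁) +
      (rot x₄ q₂ x₂ q₁ x₁ x₃) +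
      (rot q₂ x₂ q₁ x₁ x₃ x₄) +
      (rot x₂ q₁ x₁ x₃ x₄ q₂) +
      (-1 : ℂ) * (rot x₄ q₂ x₂ q₁ x₃ x₁) +
      (-1 : ℂ) * (rot q₂ x₂ q₁ x₃ x₁ x₄) +
      (-1 : ℂ) * (rot x₂ q₁ x₃ x₁ x₄ q₂) +
      (-1 : ℂ) * (rot x₁ x₄ q₁ x₂ q₂ x₃) +
      (-1 : ℂ) * (rot x₄ q₁ x₂ q₂ x₃ x₁) +
      (rot x₄ x₁ q₁ x₂ q₂ x₃) +
      (rot x₁ q₁ x₂ q₂ x₃ x₄) +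
      (rot x₁ x₄ q₂ x₂ q₁ x₃) +
      (rot x₄ q₂ x₂ q₁ x₃ x₁) +
      (rot q₂ x₂ q₁ x₃ x₁ x₄) +
      (rot x₂ q₁ x₃ x₁ x₄ q₂) +
      (-1 : ℂ) * (rot x₄ x₁ q₂ x₂ q₁ x₃) +
      (-1 : ℂ) * (rot x₁ q₂ x₂ q₁ x₃ x₄) +
      (-1 : ℂ) * (rot q₂ x₂ q₁ x₃ x₄ x₁) +
      (-1 : ℂ) * (rot x₂ q₁ x₃ x₄ x₁ q₂) +
      (rot x₁ x₄ q₁ x₃ q₂ x₂) +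
      (rot x₄ q₁ x₃ q₂ x₂ x₁) +
      (-1 : ℂ) * (rot x₄ x₁ q₁ x₃ q₂ x₂) +
      (-1 : ℂ) * (rot x₁ q₁ x₃ q₂ x₂ x₄) +
      (-1 : ℂ) * (rot x₁ x₄ q₂ x₃ q₁ x₂) +
      (-1 : ℂ) * (rot x₄ q₂ x₃ q₁ x₂ x₁) +
      (-1 : ℂ) * (rot q₂ x₃ q₁ x₂ x₁ x₄) +
      (-1 : ℂ) * (rot x₃ q₁ x₂ x₁ x₄ q₂) +
      (rot x₄ x₁ q₂ x₃ q₁ x₂) +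
      (rot x₁ q₂ x₃ q₁ x₂ x₄) +
      (rot q₂ x₃ q₁ x₂ x₄ x₁) +
      (rot x₃ q₁ x₂ x₄ x₁ q₂) +
      (rot x₂ q₁ x₁ x₄ q₂ x₃) +
      (-1 : ℂ) * (rot x₂ q₁ x₄ x₁ q₂ x₃) +
      (-1 : ℂ) * (rot x₂ q₂ x₁ x₄ q₁ x₃) +
      (-1 : ℂ) * (rot q₂ x₁ x₄ q₁ x₃ x₂) +
      (-1 : ℂ) * (rot x₁ x₄ q₁ x₃ x₂ q₂) +
      (-1 : ℂ) * (rot x₄ q₁ x₃ x₂ q₂ x₁) +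
      (rot x₂ q₂ x₄ x₁ q₁ x₃) +
      (rot q₂ x₄ x₁ q₁ x₃ x₂) +
      (rot x₄ x₁ q₁ x₃ x₂ q₂) +
      (rot x₁ q₁ x₃ x₂ q₂ x₄) +
      (-1 : ℂ) * (rot x₂ q₁ x₃ q₂ x₁ x₄) +
      (rot x₂ q₁ x₃ q₂ x₄ x₁) +
      (rot x₂ q₂ x₃ q₁ x₁ x₄) +
      (rot q₂ x₃ q₁ x₁ x₄ x₂) +
      (rot x₃ q₁ x₁ x₄ x₂ q₂) +
      (-1 : ℂ) * (rot x₂ q₂ x₃ q₁ x₄ x₁) +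
      (-1 : ℂ) * (rot q₂ x₃ q₁ x₄ x₁ x₂) +
      (-1 : ℂ) * (rot x₃ q₁ x₄ x₁ x₂ q₂) +
      (-1 : ℂ) * (rot x₃ q₁ x₁ x₄ q₂ x₂) +
      (rot x₃ q₁ x₄ x₁ q₂ x₂) +
      (rot x₃ q₂ x₁ x₄ q₁ x₂) +
      (rot q₂ x₁ x₄ q₁ x₂ x₃) +
      (rot x₁ x₄ q₁ x₂ x₃ q₂) +
      (rot x₄ q₁ x₂ x₃ q₂ x₁) +
      (-1 : ℂ) * (rot x₃ q₂ x₄ x₁ q₁ x₂) +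
      (-1 : ℂ) * (rot q₂ x₄ x₁ q₁ x₂ x₃) +
      (-1 : ℂ) * (rot x₄ x₁ q₁ x₂ x₃ q₂) +
      (-1 : ℂ) * (rot x₁ q₁ x₂ x₃ q₂ x₄) +
      (rot x₃ q₁ x₂ q₂ x₁ x₄) +
      (-1 : ℂ) * (rot x₃ q₁ x₂ q₂ x₄ x₁) +
      (-1 : ℂ) * (rot x₃ q₂ x₂ q₁ x₁ x₄) +
      (-1 : ℂ) * (rot q₂ x₂ q₁ x₁ x₄ x₃) +
      (-1 : ℂ) * (rot x₂ q₁ x₁ x₄ x₃ q₂) +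
      (rot x₃ q₂ x₂ q₁ x₄ x₁) +
      (rot q₂ x₂ q₁ x₄ x₁ x₃) +
      (rot x₂ q₁ x₄ x₁ x₃ q₂) +
      (-1 : ℂ) * (rot x₂ x₃ q₁ x₁ q₂ x₄) +
      (-1 : ℂ) * (rot x₃ q₁ x₁ q₂ x₄ x₂) +
      (rot x₃ x₂ q₁ x₁ q₂ x₄) +
      (rot x₂ q₁ x₁ q₂ x₄ x₃) +
      (rot x₂ x₃ q₂ x₁ q₁ x₄) +
      (rot x₃ q₂ x₁ q₁ x₄ x₂) +
      (rot q₂ x₁ q₁ x₄ x₂ x₃) +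
      (rot x₁ q₁ x₄ x₂ x₃ q₂) +
      (-1 : ℂ) * (rot x₃ x₂ q₂ x₁ q₁ x₄) +
      (-1 : ℂ) * (rot x₂ q₂ x₁ q₁ x₄ x₃) +
      (-1 : ℂ) * (rot q₂ x₁ q₁ x₄ x₃ x₂) +
      (-1 : ℂ) * (rot x₁ q₁ x₄ x₃ x₂ q₂) +
      (rot x₂ x₃ q₁ x₄ q₂ x₁) +
      (rot x₃ q₁ x₄ q₂ x₁ x₂) +
      (-1 : ℂ) * (rot x₃ x₂ q₁ x₄ q₂ x₁) +
      (-1 : ℂ) * (rot x₂ q₁ x₄ q₂ x₁ x₃) +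
      (-1 : ℂ) * (rot x₂ x₃ q₂ x₄ q₁ x₁) +
      (-1 : ℂ) * (rot x₃ q₂ x₄ q₁ x₁ x₂) +
      (-1 : ℂ) * (rot q₂ x₄ q₁ x₁ x₂ x₃) +
      (-1 : ℂ) * (rot x₄ q₁ x₁ x₂ x₃ q₂) +
      (rot x₃ x₂ q₂ x₄ q₁ x₁) +
      (rot x₂ q₂ x₄ q₁ x₁ x₃) +
      (rot q₂ x₄ q₁ x₁ x₃ x₂) +
      (rot x₄ q₁ x₁ x₃ x₂ q₂) +
      (rot x₁ q₁ x₂ x₃ q₂ x₄) +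
      (-1 : ℂ) * (rot x₁ q₁ x₃ x₂ q₂ x₄) +
      (-1 : ℂ) * (rot x₁ q₂ x₂ x₃ q₁ x₄) +
      (-1 : ℂ) * (rot q₂ x₂ x₃ q₁ x₄ x₁) +
      (-1 : ℂ) * (rot x₂ x₃ q₁ x₄ x₁ q₂) +
      (-1 : ℂ) * (rot x₃ q₁ x₄ x₁ q₂ x₂) +
      (rot x₁ q₂ x₃ x₂ q₁ x₄) +
      (rot q₂ x₃ x₂ q₁ x₄ x₁) +
      (rot x₃ x₂ q₁ x₄ x₁ q₂) +
      (rot x₂ q₁ x₄ x₁ q₂ x₃) +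
      (-1 : ℂ) * (rot x₁ q₁ x₄ q₂ x₂ x₃) +
      (rot x₁ q₁ x₄ q₂ x₃ x₂) +
      (rot x₁ q₂ x₄ q₁ x₂ x₃) +
      (rot q₂ x₄ q₁ x₂ x₃ x₁) +
      (rot x₄ q₁ x₂ x₃ x₁ q₂) +
      (-1 : ℂ) * (rot x₁ q₂ x₄ q₁ x₃ x₂) +
      (-1 : ℂ) * (rot q₂ x₄ q₁ x₃ x₂ x₁) +
      (-1 : ℂ) * (rot x₄ q₁ x₃ x₂ x₁ q₂) +
      (-1 : ℂ) * (rot x₄ q₁ x₂ x₃ q₂ x₁) +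
      (rot x₄ q₁ x₃ x₂ q₂ x₁) +
      (rot x₄ q₂ x₂ x₃ q₁ x₁) +
      (rot q₂ x₂ x₃ q₁ x₁ x₄) +
      (rot x₂ x₃ q₁ x₁ x₄ q₂) +
      (rot x₃ q₁ x₁ x₄ q₂ x₂) +
      (-1 : ℂ) * (rot x₄ q₂ x₃ x₂ q₁ x₁) +
      (-1 : ℂ) * (rot q₂ x₃ x₂ q₁ x₁ x₄) +
      (-1 : ℂ) * (rot x₃ x₂ q₁ x₁ x₄ q₂) +
      (-1 : ℂ) * (rot x₂ q₁ x₁ x₄ q₂ x₃) +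
      (rot x₄ q₁ x₁ q₂ x₂ x₃) +
      (-1 : ℂ) * (rot x₄ q₁ x₁ q₂ x₃ x₂) +
      (-1 : ℂ) * (rot x₄ q₂ x₁ q₁ x₂ x₃) +
      (-1 : ℂ) * (rot q₂ x₁ q₁ x₂ x₃ x₄) +
      (-1 : ℂ) * (rot x₁ q₁ x₂ x₃ x₄ q₂) +
      (rot x₄ q₂ x₁ q₁ x₃ x₂) +
      (rot q₂ x₁ q₁ x₃ x₂ x₄) +
      (rot x₁ q₁ x₃ x₂ x₄ q₂) +
      (rot x₂ x₄ q₁ x₁ q₂ x₃) +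
      (rot x₄ q₁ x₁ q₂ x₃ x₂) +
      (-1 : ℂ) * (rot x₄ x₂ q₁ x₁ q₂ x₃) +
      (-1 : ℂ) * (rot x₂ q₁ x₁ q₂ x₃ x₄) +
      (-1 : ℂ) * (rot x₂ x₄ q₂ x₁ q₁ x₃) +
      (-1 : ℂ) * (rot x₄ q₂ x₁ q₁ x₃ x₂) +
      (-1 : ℂ) * (rot q₂ x₁ q₁ x₃ x₂ x₄) +
      (-1 : ℂ) * (rot x₁ q₁ x₃ x₂ x₄ q₂) +
      (rot x₄ x₂ q₂ x₁ q₁ x₃) +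
      (rot x₂ q₂ x₁ q₁ x₃ x₄) +
      (rot q₂ x₁ q₁ x₃ x₄ x₂) +
      (rot x₁ q₁ x₃ x₄ x₂ q₂) +
      (-1 : ℂ) * (rot x₂ x₄ q₁ x₃ q₂ x₁) +
      (-1 : ℂ) * (rot x₄ q₁ x₃ q₂ x₁ x₂) +
      (rot x₄ x₂ q₁ x₃ q₂ x₁) +
      (rot x₂ q₁ x₃ q₂ x₁ x₄) +
      (rot x₂ x₄ q₂ x₃ q₁ x₁) +
      (rot x₄ q₂ x₃ q₁ x₁ x₂) +
      (rot q₂ x₃ q₁ x₁ x₂ x₄) +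
      (rot x₃ q₁ x₁ x₂ x₄ q₂) +
      (-1 : ℂ) * (rot x₄ x₂ q₂ x₃ q₁ x₁) +
      (-1 : ℂ) * (rot x₂ q₂ x₃ q₁ x₁ x₄) +
      (-1 : ℂ) * (rot q₂ x₃ q₁ x₁ x₄ x₂) +
      (-1 : ℂ) * (rot x₃ q₁ x₁ x₄ x₂ q₂) +
      (-1 : ℂ) * (rot x₁ q₁ x₂ x₄ q₂ x₃) +
      (rot x₁ q₁ x₄ x₂ q₂ x₃) +
      (rot x₁ q₂ x₂ x₄ q₁ x₃) +
      (rot q₂ x₂ x₄ q₁ x₃ x₁) +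
      (rot x₂ x₄ q₁ x₃ x₁ q₂) +
      (rot x₄ q₁ x₃ x₁ q₂ x₂) +
      (-1 : ℂ) * (rot x₁ q₂ x₄ x₂ q₁ x₃) +
      (-1 : ℂ) * (rot q₂ x₄ x₂ q₁ x₃ x₁) +
      (-1 : ℂ) * (rot x₄ x₂ q₁ x₃ x₁ q₂) +
      (-1 : ℂ) * (rot x₂ q₁ x₃ x₁ q₂ x₄) +
      (rot x₁ q₁ x₃ q₂ x₂ x₄) +
      (-1 : ℂ) * (rot x₁ q₁ x₃ q₂ x₄ x₂) +
      (-1 : ℂ) * (rot x₁ q₂ x₃ q₁ x₂ x₄) +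
      (-1 : ℂ) * (rot q₂ x₃ q₁ x₂ x₄ x₁) +
      (-1 : ℂ) * (rot x₃ q₁ x₂ x₄ x₁ q₂) +
      (rot x₁ q₂ x₃ q₁ x₄ x₂) +
      (rot q₂ x₃ q₁ x₄ x₂ x₁) +
      (rot x₃ q₁ x₄ x₂ x₁ q₂) +
      (rot x₃ q₁ x₂ x₄ q₂ x₁) +
      (-1 : ℂ) * (rot x₃ q₁ x₄ x₂ q₂ x₁) +
      (-1 : ℂ) * (rot x₃ q₂ x₂ x₄ q₁ x₁) +
      (-1 : ℂ) * (rot q₂ x₂ x₄ q₁ x₁ x₃) +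
      (-1 : ℂ) * (rot x₂ x₄ q₁ x₁ x₃ q₂) +
      (-1 : ℂ) * (rot x₄ q₁ x₁ x₃ q₂ x₂) +
      (rot x₃ q₂ x₄ x₂ q₁ x₁) +
      (rot q₂ x₄ x₂ q₁ x₁ x₃) +
      (rot x₄ x₂ q₁ x₁ x₃ q₂) +
      (rot x₂ q₁ x₁ x₃ q₂ x₄) +
      (-1 : ℂ) * (rot x₃ q₁ x₁ q₂ x₂ x₄) +
      (rot x₃ q₁ x₁ q₂ x₄ x₂) +
      (rot x₃ q₂ x₁ q₁ x₂ x₄) +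
      (rot q₂ x₁ q₁ x₂ x₄ x₃) +
      (rot x₁ q₁ x₂ x₄ x₃ q₂) +
      (-1 : ℂ) * (rot x₃ q₂ x₁ q₁ x₄ x₂) +
      (-1 : ℂ) * (rot q₂ x₁ q₁ x₄ x₂ x₃) +
      (-1 : ℂ) * (rot x₁ q₁ x₄ x₂ x₃ q₂) +
      (-1 : ℂ) * (rot x₃ x₄ q₁ x₁ q₂ x₂) +
      (-1 : ℂ) * (rot x₄ q₁ x₁ q₂ x₂ x₃) +
      (rot x₄ x₃ q₁ x₁ q₂ x₂) +
      (rot x₃ q₁ x₁ q₂ x₂ x₄) +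
      (rot x₃ x₄ q₂ x₁ q₁ x₂) +
      (rot x₄ q₂ x₁ q₁ x₂ x₃) +
      (rot q₂ x₁ q₁ x₂ x₃ x₄) +
      (rot x₁ q₁ x₂ x₃ x₄ q₂) +
      (-1 : ℂ) * (rot x₄ x₃ q₂ x₁ q₁ x₂) +
      (-1 : ℂ) * (rot x₃ q₂ x₁ q₁ x₂ x₄) +
      (-1 : ℂ) * (rot q₂ x₁ q₁ x₂ x₄ x₃) +
      (-1 : ℂ) * (rot x₁ q₁ x₂ x₄ x₃ q₂) +
      (rot x₃ x₄ q₁ x₂ q₂ x₁) +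
      (rot x₄ q₁ x₂ q₂ x₁ x₃) +
      (-1 : ℂ) * (rot x₄ x₃ q₁ x₂ q₂ x₁) +
      (-1 : ℂ) * (rot x₃ q₁ x₂ q₂ x₁ x₄) +
      (-1 : ℂ) * (rot x₃ x₄ q₂ x₂ q₁ x₁) +
      (-1 : ℂ) * (rot x₄ q₂ x₂ q₁ x₁ x₃) +
      (-1 : ℂ) * (rot q₂ x₂ q₁ x₁ x₃ x₄) +
      (-1 : ℂ) * (rot x₂ q₁ x₁ x₃ x₄ q₂) +
      (rot x₄ x₃ q₂ x₂ q₁ x₁) +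
      (rot x₃ q₂ x₂ q₁ x₁ x₄) +
      (rot q₂ x₂ q₁ x₁ x₄ x₃) +
      (rot x₂ q₁ x₁ x₄ x₃ q₂) +
      (rot x₁ q₁ x₃ x₄ q₂ x₂) +
      (-1 : ℂ) * (rot x₁ q₁ x₄ x₃ q₂ x₂) +
      (-1 : ℂ) * (rot x₁ q₂ x₃ x₄ q₁ x₂) +
      (-1 : ℂ) * (rot q₂ x₃ x₄ q₁ x₂ x₁) +
      (-1 : ℂ) * (rot x₃ x₄ q₁ x₂ x₁ q₂) +
      (-1 : ℂ) * (rot x₄ q₁ x₂ x₁ q₂ x₃) +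
      (rot x₁ q₂ x₄ x₃ q₁ x₂) +
      (rot q₂ x₄ x₃ q₁ x₂ x₁) +
      (rot x₄ x₃ q₁ x₂ x₁ q₂) +
      (rot x₃ q₁ x₂ x₁ q₂ x₄) +
      (-1 : ℂ) * (rot x₁ q₁ x₂ q₂ x₃ x₄) +
      (rot x₁ q₁ x₂ q₂ x₄ x₃) +
      (rot x₁ q₂ x₂ q₁ x₃ x₄) +
      (rot q₂ x₂ q₁ x₃ x₄ x₁) +
      (rot x₂ q₁ x₃ x₄ x₁ q₂) +
      (-1 : ℂ) * (rot x₁ q₂ x₂ q₁ x₄ x₃) +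
      (-1 : ℂ) * (rot q₂ x₂ q₁ x₄ x₃ x₁) +
      (-1 : ℂ) * (rot x₂ q₁ x₄ x₃ x₁ q₂) +
      (-1 : ℂ) * (rot x₂ q₁ x₃ x₄ q₂ x₁) +
      (rot x₂ q₁ x₄ x₃ q₂ x₁) +
      (rot x₂ q₂ x₃ x₄ q₁ x₁) +
      (rot q₂ x₃ x₄ q₁ x₁ x₂) +
      (rot x₃ x₄ q₁ x₁ x₂ q₂) +
      (rot x₄ q₁ x₁ x₂ q₂ x₃) +
      (-1 : ℂ) * (rot x₂ q₂ x₄ x₃ q₁ x₁) +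
      (-1 : ℂ) * (rot q₂ x₄ x₃ q₁ x₁ x₂) +
      (-1 : ℂ) * (rot x₄ x₃ q₁ x₁ x₂ q₂) +
      (-1 : ℂ) * (rot x₃ q₁ x₁ x₂ q₂ x₄) +
      (rot x₂ q₁ x₁ q₂ x₃ x₄) +
      (-1 : ℂ) * (rot x₂ q₁ x₁ q₂ x₄ x₃) +
      (-1 : ℂ) * (rot x₂ q₂ x₁ q₁ x₃ x₄) +
      (-1 : ℂ) * (rot q₂ x₁ q₁ x₃ x₄ x₂) +
      (-1 : ℂ) * (rot x₁ q₁ x₃ x₄ x₂ q₂) +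
      (rot x₂ q₂ x₁ q₁ x₄ x₃) +
      (rot q₂ x₁ q₁ x₄ x₃ x₂) +
      (rot x₁ q₁ x₄ x₃ x₂ q₂)
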